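/- Let p be an odd prime. If 5 divides p − 2, then gcd(S_A(4), 4^{2p} − 1) is divisible by 5 but not by 25. -/

import Mathlib

/-!
Modulo 5 we have `4 ≡ -1`, so `S_A(4)` reduces to the alternating sum of the sequence. Writing
`χ = (·/p)`, the even terms give `a(2j) ≡ 2 χ(j)` and the odd terms `a(i) ≡ 3 - 3 χ(i)`, except
for `a(p) = 2`. Both character sums run over complete residue systems modulo `p` and vanish, leaving
`S_A(4) ≡ 1 - 3p`, which is `0` when `p ≡ 2 (mod 5)`. Modulo 25, `4^{2p} = 16^p` and `16` has
order `5`, so `25 ∣ 4^{2p} - 1` would force `5 ∣ p`.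
-/

/-- The quaternary cyclotomic sequence of period 2p from Kim et al.:
`a 0 = 0`, `a p = 2`; for odd `i ≠ p`, value `0`/`1` according to Legendre symbol `(i/p) = ±1`;
for even `i > 0`, value `2`/`3` according to `((i/2)/p) = ±1`. -/
def seqA (p : ℕ) [Fact p.Prime] (i : ℕ) : ℤ :=
  if i = 0 then 0
  else if i = p then 2
  else if i % 2 = 1 then (if legendreSym p i = 1 then 0 else 1)
  else if legendreSym p (i / 2) = 1 then 2 else 3

/-- `S_A(4) = Σ_{i=0}^{2p-1} a(i)·4^i`. -/
def SA (p : ℕ) [Fact p.Prime] : ℤ := ∑ i ∈ Finset.range (2 * p), seqA p i * 4 ^ i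

/-- The Gauss sum `G_p = Σ_{a=1}^{p-1} (a/p)·4^{2a}`. -/
def Gp (p : ℕ) [Fact p.Prime] : ℤ := ∑ a ∈ Finset.Icc 1 (p - 1), legendreSym p a * 4 ^ (2 * a)

open Finset

theorem Finset.sum_range_two_mul {M : Type*} [AddCommMonoid M] (n : ℕ) (f : ℕ → M) :
    ∑ i ∈ range (2 * n), f i =
      ∑ j ∈ range n, f (2 * j) + ∑ j ∈ range n, f (2 * j + 1) := by
  induction n with
  | zero => simp
  | succ n ih =>
    rw [show 2 * (n + 1) = 2 * n + 1 + 1 by ring, sum_range_succ, sum_range_succ, ih,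
      sum_range_succ, sum_range_succ]
    abel

theorem ZMod.sum_range_natCast {M : Type*} [AddCommMonoid M] (n : ℕ) [NeZero n]
    (f : ZMod n → M) : ∑ j ∈ range n, f j = ∑ x : ZMod n, f x :=
  sum_nbij' (fun j => (j : ZMod n)) ZMod.val (fun _ _ => mem_univ _)
    (fun x _ => mem_range.mpr x.val_lt) (fun _ hj => ZMod.val_cast_of_lt (mem_range.mp hj))
    (fun x _ => ZMod.natCast_zmod_val x) (fun _ _ => rfl)

namespace legendreSym

variable {p : ℕ} [Fact p.Prime]

theorem natCast_eq_one_or_neg_one {n : ℕ} (hn : ¬ p ∣ n) :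
    legendreSym p n = 1 ∨ legendreSym p n = -1 :=
  eq_one_or_neg_one p (by rwa [Int.cast_natCast, ne_eq, ZMod.natCast_eq_zero_iff])

theorem sum_range_affine_eq_zero (hp : p ≠ 2) {a : ℤ} (ha : (a : ZMod p) ≠ 0) (b : ℤ) :
    ∑ j ∈ range p, legendreSym p (a * j + b) = 0 := by
  have hbij : Function.Bijective fun x : ZMod p => (a : ZMod p) * x + b :=
    Finite.injective_iff_bijective.mp fun x y h => mul_left_cancel₀ ha (add_right_cancel h)
  calc ∑ j ∈ range p, legendreSym p (a * j + b)
      = ∑ x : ZMod p, quadraticChar (ZMod p) (a * x + b) := by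
        rw [← ZMod.sum_range_natCast p fun x => quadraticChar (ZMod p) (a * x + b)]
        simp [legendreSym]
    _ = ∑ y : ZMod p, quadraticChar (ZMod p) y :=
        Fintype.sum_bijective _ hbij _ _ fun _ => rfl
    _ = 0 := quadraticChar_sum_zero (by rwa [ZMod.ringChar_zmod_n])

end legendreSym

section SequenceModFive

variable {p : ℕ} [Fact p.Prime]

theorem seqA_two_mul_cast (hodd : Odd p) {j : ℕ} (hj : j < p) :
    (seqA p (2 * j) : ZMod 5) = 2 * legendreSym p j := by
  rcases Nat.eq_zero_or_pos j with rfl | hj0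
  · simp [seqA]
  have hseq : seqA p (2 * j) = if legendreSym p j = 1 then 2 else 3 := by
    have : 2 * j ≠ p := by rintro rfl; exact Nat.not_odd_iff_even.2 (even_two_mul j) hodd
    simp [seqA, hj0.ne', this]
  rcases legendreSym.natCast_eq_one_or_neg_one (Nat.not_dvd_of_pos_of_lt hj0 hj) with h | h <;>
    rw [hseq, h] <;> decide

theorem seqA_cast_of_odd {n : ℕ} (hn : n % 2 = 1) (hlt : n < 2 * p) :
    (seqA p n : ZMod 5) = 3 - 3 * legendreSym p n - if n = p then 1 else 0 := by
  by_cases hnp : n = p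
  · subst hnp
    have hseq : seqA n n = 2 := by simp [seqA, (Fact.out : n.Prime).ne_zero]
    rw [hseq, (legendreSym.eq_zero_iff _ _).mpr (by simp), if_pos rfl]
    decide
  have hseq : seqA p n = if legendreSym p n = 1 then 0 else 1 := by
    simp [seqA, hnp, hn, show n ≠ 0 by omega]
  have hndvd : ¬ p ∣ n := fun h => hnp (Nat.eq_of_dvd_of_lt_two_mul (by omega) h hlt)
  rcases legendreSym.natCast_eq_one_or_neg_one hndvd with h | h <;>
    rw [hseq, h, if_neg hnp] <;> decide

theorem SA_cast_zmod_five (hodd : Odd p) :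
    (SA p : ZMod 5) = 1 - 3 * p := by
  have hp2 : p ≠ 2 := by rintro rfl; exact absurd hodd (by decide)
  have hpo : p % 2 = 1 := Nat.odd_iff.mp hodd
  have h4 : (4 : ZMod 5) = -1 := by decide
  have hsum_even : ∑ j ∈ range p, legendreSym p j = 0 := by
    simpa using legendreSym.sum_range_affine_eq_zero hp2 (a := 1) (by simp) 0
  have hsum_odd : ∑ j ∈ range p, legendreSym p (2 * j + 1 : ℕ) = 0 := by
    have h2 : ((2 : ℤ) : ZMod p) ≠ 0 := by
      exact_mod_cast (ZMod.natCast_eq_zero_iff 2 p).not.mpr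
        (fun h => hp2 ((Nat.prime_dvd_prime_iff_eq Fact.out Nat.prime_two).mp h))
    simpa using legendreSym.sum_range_affine_eq_zero hp2 h2 1
  have hmid : p / 2 ∈ range p := mem_range.mpr (by omega)
  calc (SA p : ZMod 5)
      = ∑ j ∈ range p, (seqA p (2 * j) : ZMod 5) -
          ∑ j ∈ range p, (seqA p (2 * j + 1) : ZMod 5) := by
        simp [SA, sum_range_two_mul, pow_succ, pow_mul, show (16 : ZMod 5) = 1 by decide, h4,
          sub_eq_add_neg]
    _ = 2 * ∑ j ∈ range p, (legendreSym p j : ZMod 5) -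
          ∑ j ∈ range p, (3 - 3 * (legendreSym p (2 * j + 1 : ℕ) : ZMod 5) -
            if j = p / 2 then 1 else 0) := by
        rw [mul_sum]
        congr 1 <;> refine sum_congr rfl fun j hj => ?_
        · exact seqA_two_mul_cast hodd (mem_range.mp hj)
        · rw [seqA_cast_of_odd (by omega) (by simp at hj; omega)]
          simp only [show 2 * j + 1 = p ↔ j = p / 2 by omega]
    _ = 1 - 3 * p := by
        simp only [sum_sub_distrib, ← mul_sum, sum_ite_eq', if_pos hmid, sum_const, card_range]
        rw [← Int.cast_sum, ← Int.cast_sum, hsum_even, hsum_odd]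
        ring

end SequenceModFive

theorem five_dvd_four_pow_two_mul_sub_one (n : ℕ) : (5 : ℤ) ∣ 4 ^ (2 * n) - 1 := by
  have h := sub_dvd_pow_sub_pow (16 : ℤ) 1 n
  rw [one_pow] at h
  rw [pow_mul]
  norm_num
  exact dvd_trans (by norm_num) h

theorem twenty_five_dvd_four_pow_two_mul_sub_one_iff (n : ℕ) :
    (25 : ℤ) ∣ 4 ^ (2 * n) - 1 ↔ 5 ∣ n := by
  have : Fact (Nat.Prime 5) := ⟨by norm_num⟩
  have horder : orderOf (16 : ZMod 25) = 5 := orderOf_eq_prime (by decide) (by decide)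
  rw [show (25 : ℤ) = (25 : ℕ) from rfl, ← ZMod.intCast_zmod_eq_zero_iff_dvd, ← horder,
    orderOf_dvd_iff_pow_eq_one]
  push_cast
  rw [sub_eq_zero, pow_mul]
  norm_num

/-- if `5 ∣ p − 2`, then `gcd(S_A(4), 4^{2p} − 1)` is divisible by `5`
but not by `25`. -/
theorem stmt12 (p : ℕ) [Fact p.Prime] (hodd : Odd p) (h5 : 5 ∣ p - 2) :
    5 ∣ Int.gcd (SA p) (4 ^ (2 * p) - 1) ∧ ¬ (25 ∣ Int.gcd (SA p) (4 ^ (2 * p) - 1)) := by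
  have hp5 : p % 5 = 2 := by have := (Fact.out : p.Prime).two_le; omega
  have hSA : (5 : ℤ) ∣ SA p := by
    rw [show (5 : ℤ) = (5 : ℕ) from rfl, ← ZMod.intCast_zmod_eq_zero_iff_dvd,
      SA_cast_zmod_five hodd, ← ZMod.natCast_mod, hp5]
    decide
  refine ⟨Int.ofNat_dvd.mp (Int.dvd_coe_gcd hSA (five_dvd_four_pow_two_mul_sub_one p)), ?_⟩
  intro h25
  have : 5 ∣ p := (twenty_five_dvd_four_pow_two_mul_sub_one_iff p).mp
    ((Int.ofNat_dvd.mpr h25).trans (Int.gcd_dvd_right _ _))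
  omega
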